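/- (Detection of Werner states.) Fix γ ∈ (0,1/2] and F ∈ [0,1], and let φ_F = F·|Ψ⁺⟩⟨Ψ⁺| + (1−F)·I₄/4 be a two-qubit Werner state. With Q₀ = R₀ = 2γ|Ψ⁺⟩⟨Ψ⁺|, Q₁ = R₁ = 2γ|Ψ⁻⟩⟨Ψ⁻|, define M_{a,b}[(i,k),(j,l)] = Σ_{i',k',i'',k''} Q_a[(i,i'),(j,i'')]·R_b[(k,k'),(l,k'')]·φ_F[(i'',k''),(i',k')], and set Π₀ = M_{0,0}+M_{1,1}, Π₁ = M_{0,1}+M_{1,0}, Π_∅ = I₄−Π₀−Π₁. Then (Π₀,Π₁,Π_∅) is a γ-admissible triple whose normalized guessing probability equals V/γ² = 1/2 + F/(2√2); in particular it exceeds the PPT bound 1/2 + 1/(4√2) if and only if F > 1/2. -/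

import Mathlib

open Matrix Complex Kronecker BigOperators ComplexOrder

noncomputable section

abbrev Mat2 := Matrix (Fin 2) (Fin 2) ℂ
abbrev Mat4 := Matrix (Fin 2 × Fin 2) (Fin 2 × Fin 2) ℂ

/-- Pauli X matrix -/
def PX : Mat2 := !![0, 1; 1, 0]

/-- Pauli Y matrix -/
def PY : Mat2 := !![0, -Complex.I; Complex.I, 0]

/-- sign (−1)^b for a bit b -/
def bsign (b : Bool) : ℂ := if b then -1 else 1

/-- boolean function f(x̄,ȳ) = (x₁·y₁) XOR x₂ XOR y₂ -/
def fxy (x y : Bool × Bool) : Bool := (((x.1 && y.1)).xor x.2).xor y.2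

/-- qubit input states ω_{x̄}: ω_{(0,x₂)} = (I+(−1)^{x₂}X)/2, ω_{(1,x₂)} = (I+(−1)^{x₂}Y)/2 -/
def omg (x : Bool × Bool) : Mat2 :=
  (1/2 : ℂ) • ((1 : Mat2) + bsign x.2 • (if x.1 then PY else PX))

/-- qubit input states τ_{ȳ} = (I+(−1)^{y₂}(X+(−1)^{y₁}Y)/√2)/2 -/
def tau (y : Bool × Bool) : Mat2 :=
  (1/2 : ℂ) • ((1 : Mat2) + (bsign y.2 / (Real.sqrt 2 : ℂ)) • (PX + bsign y.1 • PY))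

/-- averaged input states ρ₀ (for c = false) and ρ₁ (for c = true) -/
def rho (c : Bool) : Mat4 :=
  (1/8 : ℂ) • ∑ x : Bool × Bool, ∑ y : Bool × Bool,
    (if fxy x y = c then omg x ⊗ₖ tau y else 0)

/-- standard basis vectors of ℂ⁴ ≅ ℂ² ⊗ ℂ² -/
def ket (i j : Fin 2) : (Fin 2 × Fin 2) → ℂ := fun p => if p = (i, j) then 1 else 0

def PhiP : (Fin 2 × Fin 2) → ℂ := fun p => (1 / (Real.sqrt 2 : ℂ)) * (ket 0 0 p + ket 1 1 p)
def PhiM : (Fin 2 × Fin 2) → ℂ := fun p => (1 / (Real.sqrt 2 : ℂ)) * (ket 0 0 p - ket 1 1 p)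
def PsiP : (Fin 2 × Fin 2) → ℂ := fun p => (1 / (Real.sqrt 2 : ℂ)) * (ket 0 1 p + ket 1 0 p)
def PsiM : (Fin 2 × Fin 2) → ℂ := fun p => (1 / (Real.sqrt 2 : ℂ)) * (ket 0 1 p - ket 1 0 p)

/-- rank one projector |v⟩⟨v| -/
def proj (v : (Fin 2 × Fin 2) → ℂ) : Mat4 := Matrix.vecMulVec v (star v)

/-- a γ-admissible measurement triple -/
def Admissible (γ : ℝ) (P0 P1 Pe : Mat4) : Prop :=
  P0.PosSemidef ∧ P1.PosSemidef ∧ Pe.PosSemidef ∧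
  P0 + P1 + Pe = 1 ∧
  ∀ x y : Bool × Bool, ((omg x ⊗ₖ tau y) * Pe).trace = 1 - (γ : ℂ)^2

/-- guessing value V = (1/2)·Tr[ρ₀Π₀ + ρ₁Π₁] (a real number) -/
def Gval (P0 P1 : Mat4) : ℝ := (1/2) * ((rho false * P0 + rho true * P1).trace).re

/-- effective two-qubit operator: partial trace over the target systems of
    (Q_a ⊗ R_b)(I_A ⊗ φ_{A'B'} ⊗ I_B) -/
def effM (Q R phi : Mat4) : Mat4 := Matrix.of fun p q =>
  ∑ i' : Fin 2, ∑ k' : Fin 2, ∑ i'' : Fin 2, ∑ k'' : Fin 2,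
    Q (p.1, i') (q.1, i'') * R (p.2, k') (q.2, k'') * phi (i'', k'') (i', k')

/-- two-qubit Werner state F·|Ψ⁺⟩⟨Ψ⁺| + (1−F)·I/4 -/
def werner (F : ℝ) : Mat4 := (F : ℂ) • proj PsiP + (((1 - F)/4 : ℝ) : ℂ) • 1

/-!
Tracing out the Werner state, the outcome operators become
`Π₀ = γ² [(1+3F)/2 |Ψ⁺⟩⟨Ψ⁺| + (1-F)/2 (|Ψ⁻⟩⟨Ψ⁻| + |00⟩⟨00| + |11⟩⟨11|)]` and `Π₁`, the same with
`Ψ⁺` and `Ψ⁻` exchanged; both are positive for `F ∈ [0,1]`. Their sum is diagonal with entries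
`γ² (1 ∓ F)`, so `Π_∅` is diagonal, positive once `γ ≤ 1/2`, and since every input `ω ⊗ τ` has all
diagonal entries `1/4`, its trace against `Π_∅` is the average of the diagonal, `1 - γ²`. Finally
`ρ_c = I/4 + (-1)^c (|Ψ⁺⟩⟨Ψ⁺| - |Ψ⁻⟩⟨Ψ⁻|) / (4√2)`, whence `Tr[ρ₀Π₀ + ρ₁Π₁] = γ² (1 + F/√2)`.
-/

lemma posSemidef_proj (v : Fin 2 × Fin 2 → ℂ) : (proj v).PosSemidef :=
  posSemidef_vecMulVec_self_star v

lemma trace_mul_diagonal_of_diag_eq {n R : Type*} [Fintype n] [DecidableEq n] [CommSemiring R]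
    {A : Matrix n n R} {c : R} (hA : ∀ i, A i i = c) (d : n → R) :
    (A * diagonal d).trace = c * ∑ i, d i := by
  simp [trace, mul_diagonal, hA, Finset.mul_sum]

lemma ofReal_sqrt_two_inv_mul_self :
    ((Real.sqrt 2 : ℝ) : ℂ)⁻¹ * ((Real.sqrt 2 : ℝ) : ℂ)⁻¹ = 1 / 2 := by
  rw [← mul_inv, ← Complex.ofReal_mul, Real.mul_self_sqrt zero_le_two]
  norm_num

lemma proj_PsiP_apply (p q : Fin 2 × Fin 2) :
    proj PsiP p q = if p.1 ≠ p.2 ∧ q.1 ≠ q.2 then 1 / 2 else 0 := by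
  fin_cases p <;> fin_cases q <;>
    simp [proj, vecMulVec_apply, PsiP, ket, ofReal_sqrt_two_inv_mul_self]

lemma proj_PsiM_apply (p q : Fin 2 × Fin 2) :
    proj PsiM p q =
      if p.1 ≠ p.2 ∧ q.1 ≠ q.2 then (if p.1 = q.1 then 1 / 2 else -(1 / 2)) else 0 := by
  fin_cases p <;> fin_cases q <;>
    simp [proj, vecMulVec_apply, PsiM, ket, ofReal_sqrt_two_inv_mul_self]

lemma proj_ket_apply (i j : Fin 2) (p q : Fin 2 × Fin 2) :
    proj (ket i j) p q = if p = (i, j) ∧ q = (i, j) then 1 else 0 := by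
  simp only [proj, vecMulVec_apply, Pi.star_apply, ket]
  split_ifs <;> simp_all

lemma omg_apply_self (x : Bool × Bool) (i : Fin 2) : omg x i i = 1 / 2 := by
  rcases x with ⟨_ | _, _ | _⟩ <;> fin_cases i <;> simp [omg, PX, PY, bsign]

lemma tau_apply_self (y : Bool × Bool) (i : Fin 2) : tau y i i = 1 / 2 := by
  rcases y with ⟨_ | _, _ | _⟩ <;> fin_cases i <;> simp [tau, PX, PY, bsign]

set_option maxHeartbeats 2000000 in
lemma rho_eq (c : Bool) :
    rho c = (1 / 4 : ℂ) • 1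
      + (bsign c / (4 * ((Real.sqrt 2 : ℝ) : ℂ))) • (proj PsiP - proj PsiM) := by
  ext p q
  cases c <;> fin_cases p <;> fin_cases q <;>
    simp [rho, Fintype.sum_prod_type, fxy, omg, tau, bsign, PX, PY, proj_PsiP_apply,
      proj_PsiM_apply, one_apply] <;> ring_nf <;> simp only [I_sq] <;> ring_nf

def outcomeOp (γ F : ℝ) (u v : Fin 2 × Fin 2 → ℂ) : Mat4 :=
  ((γ ^ 2 * (1 + 3 * F) / 2 : ℝ) : ℂ) • proj u
    + ((γ ^ 2 * (1 - F) / 2 : ℝ) : ℂ) • (proj v + proj (ket 0 0) + proj (ket 1 1))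

lemma posSemidef_outcomeOp (γ : ℝ) {F : ℝ} (hF : 0 ≤ F) (hF' : F ≤ 1)
    (u v : Fin 2 × Fin 2 → ℂ) : (outcomeOp γ F u v).PosSemidef := by
  refine ((posSemidef_proj u).smul ?_).add
    ((((posSemidef_proj v).add (posSemidef_proj _)).add (posSemidef_proj _)).smul ?_) <;>
  · rw [Complex.zero_le_real]
    positivity

set_option maxHeartbeats 1000000 in
lemma effM_same_add (γ F : ℝ) :
    effM ((2 * γ : ℝ) • proj PsiP) ((2 * γ : ℝ) • proj PsiP) (werner F)
      + effM ((2 * γ : ℝ) • proj PsiM) ((2 * γ : ℝ) • proj PsiM) (werner F)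
      = outcomeOp γ F PsiP PsiM := by
  ext p q
  simp only [outcomeOp, Matrix.add_apply, effM, of_apply, Matrix.smul_apply, werner,
    proj_PsiP_apply, proj_PsiM_apply, proj_ket_apply, one_apply, Fin.sum_univ_two, smul_eq_mul,
    Complex.real_smul]
  fin_cases p <;> fin_cases q <;> norm_num [Prod.ext_iff] <;> ring

set_option maxHeartbeats 1000000 in
lemma effM_cross_add (γ F : ℝ) :
    effM ((2 * γ : ℝ) • proj PsiP) ((2 * γ : ℝ) • proj PsiM) (werner F)
      + effM ((2 * γ : ℝ) • proj PsiM) ((2 * γ : ℝ) • proj PsiP) (werner F)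
      = outcomeOp γ F PsiM PsiP := by
  ext p q
  simp only [outcomeOp, Matrix.add_apply, effM, of_apply, Matrix.smul_apply, werner,
    proj_PsiP_apply, proj_PsiM_apply, proj_ket_apply, one_apply, Fin.sum_univ_two, smul_eq_mul,
    Complex.real_smul]
  fin_cases p <;> fin_cases q <;> norm_num [Prod.ext_iff] <;> ring

def abortWeight (γ F : ℝ) (p : Fin 2 × Fin 2) : ℝ :=
  1 - γ ^ 2 * (if p.1 = p.2 then 1 - F else 1 + F)

lemma one_sub_outcomeOp_sub_outcomeOp (γ F : ℝ) :
    1 - outcomeOp γ F PsiP PsiM - outcomeOp γ F PsiM PsiP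
      = diagonal fun p => (abortWeight γ F p : ℂ) := by
  ext p q
  simp only [outcomeOp, Matrix.sub_apply, Matrix.add_apply, Matrix.smul_apply, one_apply,
    diagonal_apply, proj_PsiP_apply, proj_PsiM_apply, proj_ket_apply, abortWeight, smul_eq_mul]
  fin_cases p <;> fin_cases q <;> norm_num [Prod.ext_iff] <;> ring

lemma posSemidef_diagonal_abortWeight {γ F : ℝ} (hγ : 0 < γ) (hγ' : γ ≤ 1 / 2) (hF : 0 ≤ F)
    (hF' : F ≤ 1) : (diagonal fun p => (abortWeight γ F p : ℂ)).PosSemidef := by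
  refine posSemidef_diagonal_iff.mpr fun p => ?_
  rw [Complex.zero_le_real, abortWeight]
  split_ifs <;> nlinarith

lemma sum_abortWeight (γ F : ℝ) : ∑ p, abortWeight γ F p = 4 * (1 - γ ^ 2) := by
  simp only [abortWeight, Fintype.sum_prod_type, Fin.sum_univ_two]
  norm_num
  ring

lemma trace_input_mul_diagonal_abortWeight (γ F : ℝ) (x y : Bool × Bool) :
    ((omg x ⊗ₖ tau y) * diagonal fun p => (abortWeight γ F p : ℂ)).trace = 1 - (γ : ℂ) ^ 2 := by
  have input_diag (p : Fin 2 × Fin 2) : (omg x ⊗ₖ tau y) p p = 1 / 4 := by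
    rw [kroneckerMap_apply, omg_apply_self, tau_apply_self]
    norm_num
  rw [trace_mul_diagonal_of_diag_eq input_diag, ← Complex.ofReal_sum, sum_abortWeight]
  push_cast
  ring

lemma trace_rho_mul_outcomeOp_add (γ F : ℝ) :
    (rho false * outcomeOp γ F PsiP PsiM + rho true * outcomeOp γ F PsiM PsiP).trace
      = ((γ ^ 2 * (1 + F / Real.sqrt 2) : ℝ) : ℂ) := by
  simp [rho_eq, trace, mul_apply, Fintype.sum_prod_type, outcomeOp, proj_PsiP_apply,
    proj_PsiM_apply, proj_ket_apply, one_apply, bsign]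
  ring

lemma Gval_outcomeOp_div_sq {γ : ℝ} (hγ : γ ≠ 0) (F : ℝ) :
    Gval (outcomeOp γ F PsiP PsiM) (outcomeOp γ F PsiM PsiP) / γ ^ 2
      = 1 / 2 + F / (2 * Real.sqrt 2) := by
  rw [Gval, trace_rho_mul_outcomeOp_add, Complex.ofReal_re]
  field_simp

/-- detection of Werner states. -/
theorem werner_detection (γ : ℝ) (hγ : 0 < γ) (hγ' : γ ≤ 1/2) (F : ℝ)
    (hF : 0 ≤ F) (hF' : F ≤ 1) :
    Admissible γ
      (effM ((2*γ : ℝ) • proj PsiP) ((2*γ : ℝ) • proj PsiP) (werner F)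
        + effM ((2*γ : ℝ) • proj PsiM) ((2*γ : ℝ) • proj PsiM) (werner F))
      (effM ((2*γ : ℝ) • proj PsiP) ((2*γ : ℝ) • proj PsiM) (werner F)
        + effM ((2*γ : ℝ) • proj PsiM) ((2*γ : ℝ) • proj PsiP) (werner F))
      (1 - (effM ((2*γ : ℝ) • proj PsiP) ((2*γ : ℝ) • proj PsiP) (werner F)
             + effM ((2*γ : ℝ) • proj PsiM) ((2*γ : ℝ) • proj PsiM) (werner F))
         - (effM ((2*γ : ℝ) • proj PsiP) ((2*γ : ℝ) • proj PsiM) (werner F)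
             + effM ((2*γ : ℝ) • proj PsiM) ((2*γ : ℝ) • proj PsiP) (werner F))) ∧
    Gval (effM ((2*γ : ℝ) • proj PsiP) ((2*γ : ℝ) • proj PsiP) (werner F)
            + effM ((2*γ : ℝ) • proj PsiM) ((2*γ : ℝ) • proj PsiM) (werner F))
         (effM ((2*γ : ℝ) • proj PsiP) ((2*γ : ℝ) • proj PsiM) (werner F)
            + effM ((2*γ : ℝ) • proj PsiM) ((2*γ : ℝ) • proj PsiP) (werner F)) / γ^2
      = 1/2 + F/(2*Real.sqrt 2) ∧
    (1/2 + 1/(4*Real.sqrt 2)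
        < Gval (effM ((2*γ : ℝ) • proj PsiP) ((2*γ : ℝ) • proj PsiP) (werner F)
                  + effM ((2*γ : ℝ) • proj PsiM) ((2*γ : ℝ) • proj PsiM) (werner F))
               (effM ((2*γ : ℝ) • proj PsiP) ((2*γ : ℝ) • proj PsiM) (werner F)
                  + effM ((2*γ : ℝ) • proj PsiM) ((2*γ : ℝ) • proj PsiP) (werner F)) / γ^2
      ↔ 1/2 < F) := by
  rw [effM_same_add, effM_cross_add]
  refine ⟨⟨posSemidef_outcomeOp γ hF hF' _ _, posSemidef_outcomeOp γ hF hF' _ _, ?_, by abel,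
    fun x y => ?_⟩, Gval_outcomeOp_div_sq hγ.ne' F, ?_⟩
  · rw [one_sub_outcomeOp_sub_outcomeOp]
    exact posSemidef_diagonal_abortWeight hγ hγ' hF hF'
  · rw [one_sub_outcomeOp_sub_outcomeOp]
    exact trace_input_mul_diagonal_abortWeight γ F x y
  · have hs : 0 < 2 * Real.sqrt 2 := by positivity
    rw [Gval_outcomeOp_div_sq hγ.ne', show 1 / (4 * Real.sqrt 2) = (1 / 2) / (2 * Real.sqrt 2) by
      field_simp; ring, add_lt_add_iff_left, div_lt_div_iff_of_pos_right hs]
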